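/- Let $T$ be the dyadic shift ($T h_I = h_{I_+} - h_{I_-}$ for $I$ even, $0$ for odd) and let $b \in L^2_{loc}$. Define the paraproduct $D(b,f) = \sum_I \langle b \rangle_I (f, h_I) h_I$ where $\langle b \rangle_I = (b, \mathbf{1}_I/|I|)$. Then the commutator satisfies $T D(b, f) - D(b, T f) = \sum_{I \text{ odd}} \frac{-1}{|\hat I|^{1/2}} (b, h_{\hat I}) (f, h_{\hat I}) h_I$, where the sum runs over odd dyadic intervals $I$ and $\hat I$ is the parent of $I$. -/

import Mathlib

open MeasureTheory
open scoped Classical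

/-- A dyadic interval `[k·2^(-n), (k+1)·2^(-n))` on the real line, encoded by its
scale `n` (so that `|I| = 2^(-n)`) and its position `k`. -/
structure DI where
  n : ℤ
  k : ℤ

namespace DI

/-- The underlying half-open interval of a dyadic interval. -/
noncomputable def set (I : DI) : Set ℝ :=
  Set.Ico ((I.k : ℝ) * (2:ℝ) ^ (-I.n)) (((I.k : ℝ) + 1) * (2:ℝ) ^ (-I.n))

/-- The length `|I| = 2^(-n)` of a dyadic interval. -/
noncomputable def len (I : DI) : ℝ := (2:ℝ) ^ (-I.n)

/-- `I` is *even* when `|I| = 2^(-2k)` for an integer `k`. -/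
def IsEven (I : DI) : Prop := Even I.n

/-- The dyadic parent `Î` of `I`. -/
def parent (I : DI) : DI := ⟨I.n - 1, Int.ediv I.k 2⟩

/-- The left (lower) half `I₋` of `I`. -/
def left (I : DI) : DI := ⟨I.n + 1, 2 * I.k⟩

/-- The right (upper) half `I₊` of `I`. -/
def right (I : DI) : DI := ⟨I.n + 1, 2 * I.k + 1⟩

/-- The dyadic sibling of `I` (the other child of `Î`). -/
def sibling (I : DI) : DI := if I.k % 2 = 1 then ⟨I.n, I.k - 1⟩ else ⟨I.n, I.k + 1⟩

/-- `sgn (I, Î)`: equal to `+1` if `I = (Î)₊` (the right child) and `-1` if `I = (Î)₋`. -/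
noncomputable def sgn (I : DI) : ℝ := if I.k % 2 = 1 then 1 else -1

/-- Containment of dyadic intervals. -/
def Sub (I J : DI) : Prop := I.set ⊆ J.set

end DI

/-- The Haar function `h_I = |I|^{-1/2} (𝟏_{I₊} - 𝟏_{I₋})`. -/
noncomputable def haar (I : DI) : ℝ → ℝ := fun x =>
  Real.sqrt ((2:ℝ) ^ I.n) *
    (if x ∈ DI.set (DI.right I) then 1 else if x ∈ DI.set (DI.left I) then -1 else 0)

/-- The Haar coefficient `(f, h_I)`. -/
noncomputable def hcoef (f : ℝ → ℝ) (I : DI) : ℝ := ∫ x, f x * haar I x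

/-- The average `⟨f⟩_I = (f, 𝟏_I/|I|)`. -/
noncomputable def avg (f : ℝ → ℝ) (I : DI) : ℝ := (∫ x in DI.set I, f x) / DI.len I

/-- The normalized indicator `𝟏̃_I = 𝟏_I/|I|`. -/
noncomputable def nind (I : DI) : ℝ → ℝ := fun x => if x ∈ DI.set I then 1 / DI.len I else 0

/-- The dyadic shift `T`, with `T h_I = h_{I₊} - h_{I₋}` for `I` even and `T h_I = 0`
for `I` odd. -/
noncomputable def shift (f : ℝ → ℝ) : ℝ → ℝ := fun x =>
  ∑' I : DI, if DI.IsEven I then hcoef f I * (haar (DI.right I) x - haar (DI.left I) x) else 0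

/-- The adjoint dyadic shift `T*`, with `T* h_I = sgn(I, Î) h_{Î}` for `I` odd and
`T* h_I = 0` for `I` even. -/
noncomputable def shiftAdj (f : ℝ → ℝ) : ℝ → ℝ := fun x =>
  ∑' I : DI, if DI.IsEven I then 0 else hcoef f I * DI.sgn I * haar (DI.parent I) x

/-- The paraproduct `D(b, f) = ∑_I ⟨b⟩_I (f, h_I) h_I`. -/
noncomputable def Dpara (b f : ℝ → ℝ) : ℝ → ℝ := fun x =>
  ∑' I : DI, avg b I * hcoef f I * haar I x

/-- The dyadic shift `T₁` acting in the first variable. -/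
noncomputable def shift1 (F : ℝ × ℝ → ℝ) : ℝ × ℝ → ℝ := fun p => shift (fun x => F (x, p.2)) p.1

/-- The dyadic shift `T₂` acting in the second variable. -/
noncomputable def shift2 (F : ℝ × ℝ → ℝ) : ℝ × ℝ → ℝ := fun p => shift (fun y => F (p.1, y)) p.2

/-- The adjoint shift `T₁*` acting in the first variable. -/
noncomputable def shift1Adj (F : ℝ × ℝ → ℝ) : ℝ × ℝ → ℝ := fun p =>
  shiftAdj (fun x => F (x, p.2)) p.1

/-- The adjoint shift `T₂*` acting in the second variable. -/
noncomputable def shift2Adj (F : ℝ × ℝ → ℝ) : ℝ × ℝ → ℝ := fun p =>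
  shiftAdj (fun y => F (p.1, y)) p.2

/-- The repeated commutator `𝒯^b = [T₂,[T₁,b]] = T₂T₁b· − T₂ b T₁ − T₁ b T₂ + b T₁T₂`. -/
noncomputable def repComm (b F : ℝ × ℝ → ℝ) : ℝ × ℝ → ℝ := fun p =>
  shift2 (shift1 (fun q => b q * F q)) p - shift2 (fun q => b q * shift1 F q) p
    - shift1 (fun q => b q * shift2 F q) p + b p * shift1 (shift2 F) p

/-- The repeated commutator with the adjoint shifts, `𝒯^b_* = [T₂*,[T₁*,b]]`. -/
noncomputable def repCommAdj (b F : ℝ × ℝ → ℝ) : ℝ × ℝ → ℝ := fun p =>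
  shift2Adj (shift1Adj (fun q => b q * F q)) p - shift2Adj (fun q => b q * shift1Adj F q) p
    - shift1Adj (fun q => b q * shift2Adj F q) p + b p * shift1Adj (shift2Adj F) p

/-- The bi-parameter Haar coefficient `(b, h_I ⊗ h_J)`. -/
noncomputable def hcoef2 (b : ℝ × ℝ → ℝ) (I J : DI) : ℝ :=
  ∫ p : ℝ × ℝ, b p * haar I p.1 * haar J p.2

/-- A dyadic rectangle `R = I × J` as a subset of the plane. -/
noncomputable def dRect (R : DI × DI) : Set (ℝ × ℝ) := DI.set R.1 ×ˢ DI.set R.2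

/-- The strong dyadic maximal function `M_s^d`. -/
noncomputable def strongMax (f : ℝ × ℝ → ℝ) (p : ℝ × ℝ) : ℝ :=
  sSup {r : ℝ | ∃ R : DI × DI, p ∈ dRect R ∧
    r = (∫ q in dRect R, |f q|) / (DI.len R.1 * DI.len R.2)}

/-- The enlargement `U = {M_s^d 𝟏_{U₀} ≥ 1/16}` of a set `U₀`. -/
noncomputable def enlarge (U0 : Set (ℝ × ℝ)) : Set (ℝ × ℝ) :=
  {p | (1:ℝ)/16 ≤ strongMax (U0.indicator fun _ => (1:ℝ)) p}

/-!
On a Haar function `f = h_K` every term is a combination of at most two Haar functions.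
Orthonormality gives `D(b, h_K) = ⟨b⟩_K h_K`, hence `T D(b, h_K) = ⟨b⟩_K (h_{K₊} - h_{K₋})`,
and `D(b, T h_K) = ⟨b⟩_{K₊} h_{K₊} - ⟨b⟩_{K₋} h_{K₋}`, for `K` even; all three sides vanish for
`K` odd. On the right only the two children of `K` survive, so the identity reduces to
`⟨b⟩_{K±} = ⟨b⟩_K ± |K|^{-1/2} (b, h_K)`, which is the splitting of `∫_K b` over the halves.

Orthogonality of the Haar system rests on the nesting of dyadic intervals, read off from
`x ∈ I ↔ ⌊2^n x⌋ = k`: a dyadic interval finer than `I` lies inside a single half of `I` or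
outside `I`, so `h_I` is constant on it.
-/

namespace DI

lemma len_pos (I : DI) : 0 < I.len := zpow_pos two_pos _

lemma mem_set_iff {I : DI} {x : ℝ} : x ∈ I.set ↔ ⌊x * 2 ^ I.n⌋ = I.k := by
  have h : (0 : ℝ) < 2 ^ I.n := zpow_pos two_pos _
  rw [Int.floor_eq_iff, set, Set.mem_Ico, zpow_neg, mul_inv_le_iff₀ h, lt_mul_inv_iff₀ h]

lemma floor_mul_two_zpow_sub (x : ℝ) (n : ℤ) (m : ℕ) :
    ⌊x * 2 ^ (n - m)⌋ = ⌊x * 2 ^ n⌋ / 2 ^ m := by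
  have h : x * 2 ^ (n - m) = x * 2 ^ n / ((2 ^ m : ℕ) : ℝ) := by
    rw [zpow_sub₀ two_ne_zero, zpow_natCast]; push_cast; ring
  rw [h, Int.floor_div_natCast]; push_cast; rfl

lemma mem_set_iff_mem_set_of_n_le {I J : DI} (h : I.n ≤ J.n) {x y : ℝ}
    (hx : x ∈ J.set) (hy : y ∈ J.set) : x ∈ I.set ↔ y ∈ I.set := by
  obtain ⟨m, hm⟩ := Int.le.dest h
  have hI : I.n = J.n - m := by omega
  rw [mem_set_iff, mem_set_iff, hI, floor_mul_two_zpow_sub, floor_mul_two_zpow_sub,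
    mem_set_iff.1 hx, mem_set_iff.1 hy]

lemma eq_of_mem_set_of_n_eq {I J : DI} (h : I.n = J.n) {x : ℝ} (hI : x ∈ I.set)
    (hJ : x ∈ J.set) : I = J := by
  rw [mem_set_iff] at hI hJ
  rw [h, hJ] at hI
  cases I; cases J; simp_all

lemma disjoint_set_of_n_eq {I J : DI} (h : I.n = J.n) (hne : I ≠ J) : Disjoint I.set J.set :=
  Set.disjoint_left.2 fun _ hI hJ => hne (eq_of_mem_set_of_n_eq h hI hJ)

lemma left_union_right (I : DI) : I.left.set ∪ I.right.set = I.set := by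
  ext x
  have h := floor_mul_two_zpow_sub x (I.n + 1) 1
  rw [Nat.cast_one, add_sub_cancel_right, pow_one] at h
  simp only [Set.mem_union, mem_set_iff, left, right, h]
  omega

lemma right_ne_left (I : DI) : I.right ≠ I.left := by
  intro h
  have := congrArg DI.k h
  simp only [right, left] at this
  omega

lemma disjoint_left_right (I : DI) : Disjoint I.left.set I.right.set :=
  disjoint_set_of_n_eq rfl (right_ne_left I).symm

lemma measurableSet_set (I : DI) : MeasurableSet I.set := measurableSet_Ico

lemma left_endpoint_mem_set (I : DI) : (I.k : ℝ) * 2 ^ (-I.n) ∈ I.set :=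
  ⟨le_rfl, by rw [add_one_mul]; exact lt_add_of_pos_right _ I.len_pos⟩

lemma volume_real_set (I : DI) : volume.real I.set = I.len := by
  rw [set, Real.volume_real_Ico_of_le (Set.nonempty_Ico.1 ⟨_, I.left_endpoint_mem_set⟩).le, len]
  ring

end DI

lemma haar_eq_indicator (I : DI) : haar I = fun x =>
    √(2 ^ I.n) * (I.right.set.indicator 1 x - I.left.set.indicator 1 x) := by
  funext x
  by_cases hr : x ∈ I.right.set
  · have hl : x ∉ I.left.set := fun hl => I.disjoint_left_right.notMem_of_mem_left hl hr
    simp [haar, hr, hl]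
  · by_cases hl : x ∈ I.left.set <;> simp [haar, hr, hl]

lemma mem_set_of_haar_ne_zero {I : DI} {x : ℝ} (h : haar I x ≠ 0) : x ∈ I.set := by
  rw [← I.left_union_right]
  by_contra hx
  simp only [Set.mem_union, not_or] at hx
  simp [haar, hx.1, hx.2] at h

lemma haar_mul_self (I : DI) (x : ℝ) : haar I x * haar I x = 2 ^ I.n * I.set.indicator 1 x := by
  have hs : √((2 : ℝ) ^ I.n) * √(2 ^ I.n) = 2 ^ I.n := Real.mul_self_sqrt (zpow_pos two_pos _).le
  rw [haar_eq_indicator, ← I.left_union_right, Set.indicator_union_of_disjoint I.disjoint_left_right]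
  by_cases hr : x ∈ I.right.set
  · have hl : x ∉ I.left.set := fun hl => I.disjoint_left_right.notMem_of_mem_left hl hr
    simp [hr, hl, hs]
  · by_cases hl : x ∈ I.left.set <;> simp [hr, hl, hs]

lemma integrable_indicator_one_set (I : DI) : Integrable (I.set.indicator (1 : ℝ → ℝ)) :=
  (integrableOn_const measure_Ico_lt_top.ne).integrable_indicator I.measurableSet_set

lemma integrable_haar (I : DI) : Integrable (haar I) := by
  rw [haar_eq_indicator]
  exact ((integrable_indicator_one_set _).sub (integrable_indicator_one_set _)).const_mul _

lemma integral_haar (I : DI) : ∫ x, haar I x = 0 := by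
  rw [haar_eq_indicator, integral_const_mul,
    integral_sub (integrable_indicator_one_set _) (integrable_indicator_one_set _),
    integral_indicator_one I.right.measurableSet_set, integral_indicator_one I.left.measurableSet_set,
    DI.volume_real_set, DI.volume_real_set]
  simp [DI.len, DI.right, DI.left]

lemma integral_haar_mul_self (I : DI) : ∫ x, haar I x * haar I x = 1 := by
  simp_rw [haar_mul_self]
  rw [integral_const_mul, integral_indicator_one I.measurableSet_set, DI.volume_real_set, DI.len,
    ← zpow_add₀ two_ne_zero, add_neg_cancel, zpow_zero]

lemma haar_eq_of_n_lt {I J : DI} (h : I.n < J.n) {x y : ℝ} (hx : x ∈ J.set) (hy : y ∈ J.set) :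
    haar I x = haar I y := by
  have hr : I.right.n ≤ J.n := by simp only [DI.right]; omega
  have hl : I.left.n ≤ J.n := by simp only [DI.left]; omega
  simp only [haar, DI.mem_set_iff_mem_set_of_n_le hr hx hy, DI.mem_set_iff_mem_set_of_n_le hl hx hy]

lemma integral_haar_mul_haar_of_n_lt {I J : DI} (h : I.n < J.n) :
    ∫ x, haar I x * haar J x = 0 := by
  have hconst : (fun x => haar I x * haar J x) = fun x => haar I (J.k * 2 ^ (-J.n)) * haar J x := by
    funext x
    by_cases hx : haar J x = 0
    · simp [hx]
    · rw [haar_eq_of_n_lt h (mem_set_of_haar_ne_zero hx) J.left_endpoint_mem_set]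
  rw [hconst, integral_const_mul, integral_haar, mul_zero]

lemma integral_haar_mul_haar_of_n_eq {I J : DI} (h : I.n = J.n) (hne : I ≠ J) :
    ∫ x, haar I x * haar J x = 0 := by
  have hzero : (fun x => haar I x * haar J x) = 0 := by
    funext x
    by_contra hx
    obtain ⟨hI, hJ⟩ := mul_ne_zero_iff.1 hx
    exact hne (DI.eq_of_mem_set_of_n_eq h (mem_set_of_haar_ne_zero hI) (mem_set_of_haar_ne_zero hJ))
  rw [hzero, Pi.zero_def, integral_zero]

lemma integral_haar_mul_haar (I J : DI) :
    ∫ x, haar I x * haar J x = if I = J then 1 else 0 := by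
  split_ifs with hIJ
  · rw [hIJ, integral_haar_mul_self]
  rcases lt_trichotomy I.n J.n with h | h | h
  · exact integral_haar_mul_haar_of_n_lt h
  · exact integral_haar_mul_haar_of_n_eq h hIJ
  · simp_rw [mul_comm (haar I _)]
    exact integral_haar_mul_haar_of_n_lt h

lemma norm_haar_le (I : DI) (x : ℝ) : ‖haar I x‖ ≤ √(2 ^ I.n) := by
  have := Real.sqrt_nonneg ((2 : ℝ) ^ I.n)
  simp only [haar]
  split_ifs <;> simp [abs_of_nonneg this]

lemma measurable_haar (I : DI) : Measurable (haar I) := by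
  rw [haar_eq_indicator]
  exact ((measurable_const.indicator I.right.measurableSet_set).sub
    (measurable_const.indicator I.left.measurableSet_set)).const_mul _

lemma integrable_haar_mul_haar (I J : DI) : Integrable (fun x => haar I x * haar J x) :=
  (integrable_haar J).bdd_mul (measurable_haar I).aestronglyMeasurable
    (ae_of_all _ (norm_haar_le I))

lemma hcoef_haar (K I : DI) : hcoef (haar K) I = if K = I then 1 else 0 :=
  integral_haar_mul_haar K I

lemma hcoef_const_mul (c : ℝ) (f : ℝ → ℝ) (I : DI) :
    hcoef (fun x => c * f x) I = c * hcoef f I := by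
  simp only [hcoef, mul_assoc, integral_const_mul]

lemma hcoef_haar_sub_haar (J J' I : DI) : hcoef (fun x => haar J x - haar J' x) I =
    (if J = I then 1 else 0) - (if J' = I then 1 else 0) := by
  simp only [hcoef, sub_mul]
  rw [integral_sub (integrable_haar_mul_haar J I) (integrable_haar_mul_haar J' I),
    integral_haar_mul_haar, integral_haar_mul_haar]

namespace DI

lemma left_subset (I : DI) : I.left.set ⊆ I.set :=
  I.left_union_right ▸ Set.subset_union_left

lemma right_subset (I : DI) : I.right.set ⊆ I.set :=
  I.left_union_right ▸ Set.subset_union_right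

lemma len_left (I : DI) : I.left.len = I.len / 2 := by
  rw [len, len, left, neg_add, zpow_add₀ two_ne_zero, zpow_neg_one, div_eq_mul_inv]

lemma len_right (I : DI) : I.right.len = I.len / 2 := I.len_left

lemma sqrt_two_zpow_n (I : DI) : √(2 ^ I.n) = (√I.len)⁻¹ := by
  rw [len, zpow_neg, Real.sqrt_inv, inv_inv]

end DI

lemma MeasureTheory.LocallyIntegrable.integrableOn_set {b : ℝ → ℝ} (hb : LocallyIntegrable b volume) (I : DI) :
    IntegrableOn b I.set :=
  (hb.integrableOn_isCompact isCompact_Icc).mono_set Set.Ico_subset_Icc_self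

section Averages

variable {b : ℝ → ℝ} {I : DI}

lemma setIntegral_set_eq_left_add_right (hb : IntegrableOn b I.set) :
    ∫ x in I.set, b x = (∫ x in I.left.set, b x) + ∫ x in I.right.set, b x := by
  rw [← I.left_union_right, setIntegral_union I.disjoint_left_right I.right.measurableSet_set
    (hb.mono_set I.left_subset) (hb.mono_set I.right_subset)]

lemma hcoef_eq_sqrt_mul_sub (hb : IntegrableOn b I.set) :
    hcoef b I = √(2 ^ I.n) * ((∫ x in I.right.set, b x) - ∫ x in I.left.set, b x) := by
  have hind : (fun x => b x * haar I x) =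
      fun x => √(2 ^ I.n) * (I.right.set.indicator b x - I.left.set.indicator b x) := by
    funext x
    simp only [haar_eq_indicator, Set.indicator_apply, Pi.one_apply]
    split_ifs <;> ring
  rw [hcoef, hind, integral_const_mul,
    integral_sub ((hb.mono_set I.right_subset).integrable_indicator I.right.measurableSet_set)
      ((hb.mono_set I.left_subset).integrable_indicator I.left.measurableSet_set),
    integral_indicator I.right.measurableSet_set, integral_indicator I.left.measurableSet_set]

lemma avg_right (hb : IntegrableOn b I.set) : avg b I.right = avg b I + hcoef b I / √I.len := by
  have hL := I.len_pos
  rw [avg, avg, setIntegral_set_eq_left_add_right hb, hcoef_eq_sqrt_mul_sub hb, I.len_right,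
    I.sqrt_two_zpow_n]
  field_simp
  rw [Real.sq_sqrt hL.le]
  ring

lemma avg_left (hb : IntegrableOn b I.set) : avg b I.left = avg b I - hcoef b I / √I.len := by
  have hL := I.len_pos
  rw [avg, avg, setIntegral_set_eq_left_add_right hb, hcoef_eq_sqrt_mul_sub hb, I.len_left,
    I.sqrt_two_zpow_n]
  field_simp
  rw [Real.sq_sqrt hL.le]
  ring

end Averages

namespace DI

lemma parent_left (I : DI) : I.left.parent = I := by
  simp only [parent, left, ← Int.div_def]
  congr 1 <;> omega

lemma parent_right (I : DI) : I.right.parent = I := by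
  simp only [parent, right, ← Int.div_def]
  congr 1 <;> omega

lemma eq_right_or_eq_left_of_parent_eq {I K : DI} (h : I.parent = K) :
    I = K.right ∨ I = K.left := by
  subst h
  obtain ⟨n, k⟩ := I
  simp only [parent, right, left, mk.injEq, ← Int.div_def]
  omega

lemma isEven_left_iff (I : DI) : I.left.IsEven ↔ ¬I.IsEven := by
  simp only [IsEven, left, Int.even_add_one]

lemma isEven_right_iff (I : DI) : I.right.IsEven ↔ ¬I.IsEven := I.isEven_left_iff

lemma tsum_eq_right_add_left {f : DI → ℝ} (K : DI)
    (hf : ∀ I, I ≠ K.right → I ≠ K.left → f I = 0) : ∑' I, f I = f K.right + f K.left := by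
  rw [tsum_eq_sum (s := {K.right, K.left}) fun I hI => by
      simp only [Finset.mem_insert, Finset.mem_singleton, not_or] at hI
      exact hf I hI.1 hI.2,
    Finset.sum_pair K.right_ne_left]

end DI

lemma shift_const_mul_haar (c : ℝ) (K : DI) : shift (fun x => c * haar K x) =
    fun x => if K.IsEven then c * (haar K.right x - haar K.left x) else 0 := by
  funext x
  rw [shift, tsum_eq_single K fun I hI => by simp [hcoef_const_mul, hcoef_haar, Ne.symm hI]]
  simp [hcoef_const_mul, hcoef_haar]

lemma shift_haar (K : DI) :
    shift (haar K) = fun x => if K.IsEven then haar K.right x - haar K.left x else 0 := by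
  simpa using shift_const_mul_haar 1 K

lemma Dpara_haar (b : ℝ → ℝ) (K : DI) : Dpara b (haar K) = fun x => avg b K * haar K x := by
  funext x
  rw [Dpara, tsum_eq_single K fun I hI => by simp [hcoef_haar, Ne.symm hI]]
  simp [hcoef_haar]

lemma Dpara_shift_haar (b : ℝ → ℝ) (K : DI) : Dpara b (shift (haar K)) = fun x =>
    if K.IsEven then avg b K.right * haar K.right x - avg b K.left * haar K.left x else 0 := by
  funext x
  by_cases hK : K.IsEven
  · simp only [Dpara, shift_haar, hK, if_true, hcoef_haar_sub_haar]
    rw [K.tsum_eq_right_add_left fun I hr hl => by simp [Ne.symm hr, Ne.symm hl]]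
    simp [K.right_ne_left, K.right_ne_left.symm]
    ring
  · simp [Dpara, shift_haar, hK, hcoef]

lemma tsum_odd_parent_hcoef_haar (b : ℝ → ℝ) (K : DI) (x : ℝ) :
    (∑' I : DI, if I.IsEven then 0 else
        (-1) / √I.parent.len * hcoef b I.parent * hcoef (haar K) I.parent * haar I x) =
      if K.IsEven then -1 / √K.len * hcoef b K * (haar K.right x + haar K.left x) else 0 := by
  rw [K.tsum_eq_right_add_left fun I hr hl => by
    have hK : K ≠ I.parent := fun h => (DI.eq_right_or_eq_left_of_parent_eq h.symm).elim hr hl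
    simp [hcoef_haar, hK]]
  by_cases hK : K.IsEven <;>
    simp [hK, K.isEven_right_iff, K.isEven_left_iff, DI.parent_right, DI.parent_left, hcoef_haar]
  ring

/-- **Commutator of the shift with the paraproduct `D(b,·)`:**
`T D(b,f) - D(b,Tf) = ∑_{I odd} (-1/|Î|^{1/2}) (b, h_Î)(f, h_Î) h_I`,
verified on Haar test functions `f = h_K`. -/
theorem stmt5 (b : ℝ → ℝ) (hb : MeasureTheory.LocallyIntegrable b volume) (K : DI) :
    (fun x => shift (Dpara b (haar K)) x - Dpara b (shift (haar K)) x) =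
      fun x => ∑' I : DI, if DI.IsEven I then 0 else
        (-1) / Real.sqrt (DI.len (DI.parent I)) * hcoef b (DI.parent I) *
          hcoef (haar K) (DI.parent I) * haar I x := by
  funext x
  rw [tsum_odd_parent_hcoef_haar, Dpara_haar, shift_const_mul_haar, Dpara_shift_haar]
  by_cases hK : K.IsEven
  · simp only [hK, if_true]
    have hbK := hb.integrableOn_set K
    rw [avg_right hbK, avg_left hbK]
    ring
  · simp only [hK, if_false, sub_zero]
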